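/- arXiv:2012.09905 — 4 statements merged into one kernel-verified Lean document; each statement's English description precedes it below -/
import Mathlib

section
/- Let p be a polynomial of degree at most 4, let Δx > 0, let x_{j+1/2} = x_a + j·Δx for integers j, and set û_j = (1/Δx)∫_{x_{j-1/2}}^{x_{j+1/2}} p(x) dx. Then for every j, (2û_{j-2} − 13û_{j-1} + 47û_j + 27û_{j+1} − 3û_{j+2})/60 = p(x_{j+1/2}). -/
/-!
Both sides are linear in `p`, and the cell average of `x ^ k` over `[a, b]` is
`(b ^ (k + 1) - a ^ (k + 1)) / ((k + 1) Δx)`. So it suffices to check the stencil on the monomials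
`x ^ k`, `k ≤ 4`, where it is a polynomial identity in the interface location and `Δx`.
-/

open Polynomial Finset

theorem Polynomial.intervalIntegral_eval_eq_sum {p : ℝ[X]} {n : ℕ} (hn : p.natDegree < n)
    (a b : ℝ) :
    ∫ x in a..b, p.eval x = ∑ i ∈ range n, p.coeff i * (b ^ (i + 1) - a ^ (i + 1)) / (i + 1) := by
  simp_rw [eval_eq_sum_range' hn]
  rw [intervalIntegral.integral_finsetSum fun i _ =>
    (intervalIntegral.intervalIntegrable_pow i).const_mul _]
  simp only [intervalIntegral.integral_const_mul, integral_pow, mul_div_assoc]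

theorem mp5_stencil_exact_on_monomial {k : ℕ} (hk : k < 5) (x₀ : ℝ) {h : ℝ} (hh : h ≠ 0) :
    let avg : ℝ → ℝ := fun a => ((a + h) ^ (k + 1) - a ^ (k + 1)) / (k + 1) / h
    (2 * avg (x₀ - 3 * h) - 13 * avg (x₀ - 2 * h) + 47 * avg (x₀ - h) + 27 * avg x₀
      - 3 * avg (x₀ + h)) / 60 = x₀ ^ k := by
  intro avg
  simp only [avg]
  interval_cases k <;> (field_simp; ring)

theorem mp5_linear_reconstruction_exact (p : Polynomial ℝ) (hp : p.natDegree ≤ 4)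
    (Δx xa : ℝ) (hΔx : 0 < Δx)
    -- `xh j` is the interface location x_{j+1/2} = xa + j·Δx
    (xh : ℤ → ℝ) (hxh : ∀ j : ℤ, xh j = xa + j * Δx)
    -- `u j` is the cell average of p over cell I_j = [x_{j-1/2}, x_{j+1/2}]
    (u : ℤ → ℝ) (hu : ∀ j : ℤ, u j = (1/Δx) * ∫ x in (xh (j-1))..(xh j), p.eval x) :
    ∀ j : ℤ,
      (2 * u (j-2) - 13 * u (j-1) + 47 * u j + 27 * u (j+1) - 3 * u (j+2)) / 60
        = p.eval (xh j) := by
  intro j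
  have hp5 : p.natDegree < 5 := Nat.lt_succ_of_le hp
  simp only [hu, intervalIntegral_eval_eq_sum hp5]
  rw [eval_eq_sum_range' hp5]
  simp only [mul_sum, ← sum_sub_distrib, ← sum_add_distrib, sum_div]
  refine sum_congr rfl fun k hk => ?_
  have hmono := mp5_stencil_exact_on_monomial (mem_range.1 hk) (xa + j * Δx) hΔx.ne'
  simp only [hxh] at hmono ⊢
  push_cast at hmono ⊢
  linear_combination p.coeff k * hmono
end

section
/- Let p be a polynomial of degree at most 4, Δx > 0, x_{j+1/2} = x_a + j·Δx, and û_j = (1/Δx)∫_{x_{j-1/2}}^{x_{j+1/2}} p(x) dx. Then for every j, (1/2)p(x_{j-1/2}) + p(x_{j+1/2}) + (1/6)p(x_{j+3/2}) = (1/18)û_{j-1} + (19/18)û_j + (5/9)û_{j+1}. -/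
theorem c5_left_compact_exact (p : Polynomial ℝ) (hp : p.natDegree ≤ 4)
    (Δx xa : ℝ) (hΔx : 0 < Δx)
    (xh : ℤ → ℝ) (hxh : ∀ j : ℤ, xh j = xa + j * Δx)
    (u : ℤ → ℝ) (hu : ∀ j : ℤ, u j = (1/Δx) * ∫ x in (xh (j-1))..(xh j), p.eval x) :
    ∀ j : ℤ,
      (1/2) * p.eval (xh (j-1)) + p.eval (xh j) + (1/6) * p.eval (xh (j+1))
        = (1/18) * u (j-1) + (19/18) * u j + (5/9) * u (j+1) := by
  intro j
  have h5 : p.natDegree < 5 := lt_of_le_of_lt hp (by norm_num)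
  have hev : ∀ x : ℝ, p.eval x = ∑ i ∈ Finset.range 5, p.coeff i * x ^ i := fun x =>
    Polynomial.eval_eq_sum_range' h5 x
  have hint : ∀ a b : ℝ, (∫ x in a..b, p.eval x) =
      ∑ i ∈ Finset.range 5, p.coeff i * ((b ^ (i+1) - a ^ (i+1)) / (i+1)) := by
    intro a b
    simp_rw [hev]
    rw [intervalIntegral.integral_finset_sum]
    · exact Finset.sum_congr rfl fun i _ => by
        rw [intervalIntegral.integral_const_mul, integral_pow]
    · exact fun i _ => ((continuous_const.mul (continuous_pow i)).intervalIntegrable a b)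
  simp only [hu, hint]
  simp only [hev, hxh, Finset.sum_range_succ, Finset.sum_range_zero]
  push_cast
  field_simp
  ring
end

section
/- Let p be a polynomial of degree at most 5, Δx > 0, x_{j+1/2} = x_a + j·Δx, and û_j = (1/Δx)∫_{x_{j-1/2}}^{x_{j+1/2}} p(x) dx. Then for every j, (1/3)p(x_{j-1/2}) + p(x_{j+1/2}) + (1/3)p(x_{j+3/2}) = (29/36)(û_j + û_{j+1}) + (1/36)(û_{j-1} + û_{j+2}). -/
theorem c6_central_compact_exact (p : Polynomial ℝ) (hp : p.natDegree ≤ 5)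
    (Δx xa : ℝ) (hΔx : 0 < Δx)
    (xh : ℤ → ℝ) (hxh : ∀ j : ℤ, xh j = xa + j * Δx)
    (u : ℤ → ℝ) (hu : ∀ j : ℤ, u j = (1/Δx) * ∫ x in (xh (j-1))..(xh j), p.eval x) :
    ∀ j : ℤ,
      (1/3) * p.eval (xh (j-1)) + p.eval (xh j) + (1/3) * p.eval (xh (j+1))
        = (29/36) * (u j + u (j+1)) + (1/36) * (u (j-1) + u (j+2)) := by
  intro j
  have hev : ∀ x : ℝ, p.eval x = ∑ i ∈ Finset.range 6, p.coeff i * x ^ i := by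
    intro x
    rw [Polynomial.eval_eq_sum_range' (lt_of_le_of_lt hp (by norm_num : (5:ℕ) < 6))]
  have hint : ∀ a b : ℝ, (∫ x in a..b, p.eval x)
      = ∑ i ∈ Finset.range 6, p.coeff i * ((b ^ (i+1) - a ^ (i+1)) / (i+1)) := by
    intro a b
    simp_rw [hev]
    rw [intervalIntegral.integral_finset_sum]
    · refine Finset.sum_congr rfl fun i _ => ?_
      rw [intervalIntegral.integral_const_mul, integral_pow]
    · intro i _
      exact (continuous_const.mul (continuous_pow i)).intervalIntegrable a b
  simp only [hu]
  simp only [hint]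
  simp only [hev, hxh]
  push_cast
  simp only [Finset.sum_range_succ, Finset.sum_range_zero]
  have h : (Δx : ℝ) ≠ 0 := ne_of_gt hΔx
  field_simp
  ring
end

section
/- Let p be a polynomial of degree at most 2, Δx > 0, x_{i+1/2} = x_a + i·Δx, and û_i = (1/Δx)∫_{x_{i-1/2}}^{x_{i+1/2}} p(x) dx. Then (−û_{i−1} + 5û_i + 2û_{i+1})/6 = p(x_{i+1/2}). -/
open intervalIntegral in
lemma integral_quadratic (c0 c1 c2 a b : ℝ) :
    ∫ x in a..b, (c0 + c1 * x + c2 * x ^ 2)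
      = c0 * (b - a) + c1 * (b ^ 2 - a ^ 2) / 2 + c2 * (b ^ 3 - a ^ 3) / 3 := by
  have h1 : IntervalIntegrable (fun x : ℝ => c0 + c1 * x) MeasureTheory.volume a b := by
    apply Continuous.intervalIntegrable; continuity
  have h2 : IntervalIntegrable (fun x : ℝ => c2 * x ^ 2) MeasureTheory.volume a b := by
    apply Continuous.intervalIntegrable; continuity
  have h0 : IntervalIntegrable (fun _ : ℝ => c0) MeasureTheory.volume a b :=
    intervalIntegrable_const
  have h1' : IntervalIntegrable (fun x : ℝ => c1 * x) MeasureTheory.volume a b := by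
    apply Continuous.intervalIntegrable; continuity
  rw [intervalIntegral.integral_add h1 h2, intervalIntegral.integral_add h0 h1',
    intervalIntegral.integral_const, intervalIntegral.integral_const_mul,
    intervalIntegral.integral_const_mul, integral_id, integral_pow]
  simp only [smul_eq_mul]
  ring

theorem muscl3_reconstruction_exact (p : Polynomial ℝ) (hp : p.natDegree ≤ 2)
    (Δx xa : ℝ) (hΔx : 0 < Δx)
    (xh : ℤ → ℝ) (hxh : ∀ i : ℤ, xh i = xa + i * Δx)
    (u : ℤ → ℝ) (hu : ∀ i : ℤ, u i = (1/Δx) * ∫ x in (xh (i-1))..(xh i), p.eval x) :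
    ∀ i : ℤ, (-u (i-1) + 5 * u i + 2 * u (i+1)) / 6 = p.eval (xh i) := by
  intro i
  have hev : ∀ x : ℝ, p.eval x = p.coeff 0 + p.coeff 1 * x + p.coeff 2 * x ^ 2 := by
    intro x
    rw [Polynomial.eval_eq_sum_range' (lt_of_le_of_lt hp (by norm_num : (2:ℕ) < 3))]
    simp [Finset.sum_range_succ]
  have hint : ∀ j : ℤ, (∫ x in (xh (j-1))..(xh j), p.eval x)
      = p.coeff 0 * (xh j - xh (j-1)) + p.coeff 1 * ((xh j) ^ 2 - (xh (j-1)) ^ 2) / 2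
        + p.coeff 2 * ((xh j) ^ 3 - (xh (j-1)) ^ 3) / 3 := by
    intro j
    rw [show (fun x => p.eval x) = fun x => p.coeff 0 + p.coeff 1 * x + p.coeff 2 * x ^ 2 from
      funext hev]
    exact integral_quadratic _ _ _ _ _
  have h1 := hu (i-1); have h2 := hu i; have h3 := hu (i+1)
  rw [hint] at h1 h2 h3
  rw [h1, h2, h3, hev]
  simp only [hxh] at *
  push_cast
  field_simp
  ring
end
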